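/- arXiv:math/0506284 — 2 statements merged into one kernel-verified Lean document; each statement's English description precedes it below -/
import Mathlib

section
/- Let X be a reflexive Banach space, T a bounded linear operator on X, and let (x_n)_{n∈ℕ} ⊆ X and (x_n^*)_{n∈ℕ} ⊆ X^* be compatible sequences for T. Then there exist v ∈ X with v ≠ 0 and v^* ∈ X^* with v^* ≠ 0 such that v^*(T^k v) = 0 for all integers k ≥ 1. -/
/-! By Banach–Alaoglu, `(x_n^*)` has a weak* cluster point `v^*` and `(x_n)`, viewed in
`X^** = X`, has one `v`; both are nonzero since neither sequence tends weakly to zero (by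
reflexivity the weak and weak* topologies of `X^*` agree). Letting `m → ∞` in condition (c)
gives `v^*(T^k x_ℓ) = 0` for `k ≤ ℓ`, and letting `ℓ → ∞` then gives `v^*(T^k v) = 0`. -/

open Filter Topology

def IsCompatible {𝕜 X : Type*} [RCLike 𝕜] [NormedAddCommGroup X] [NormedSpace 𝕜 X]
    (T : X →L[𝕜] X) (x : ℕ → X) (xs : ℕ → X →L[𝕜] 𝕜) : Prop :=
  (∃ C : ℝ, ∀ n, ‖x n‖ ≤ C) ∧
  (∃ C : ℝ, ∀ n, ‖xs n‖ ≤ C) ∧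
  (¬ ∃ φ : ℕ → ℕ, StrictMono φ ∧
      ∀ f : X →L[𝕜] 𝕜, Tendsto (fun n => f (x (φ n))) atTop (𝓝 0)) ∧
  (¬ ∃ φ : ℕ → ℕ, StrictMono φ ∧
      ∀ F : (X →L[𝕜] 𝕜) →L[𝕜] 𝕜, Tendsto (fun n => F (xs (φ n))) atTop (𝓝 0)) ∧
  (∃ ε : ℕ → ℝ, (∀ n, 0 < ε n) ∧ Tendsto ε atTop (𝓝 0) ∧
      ∀ k l m : ℕ, 1 ≤ k → k ≤ l → l ≤ m → ‖xs m ((T ^ k) (x l))‖ < ε m)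

theorem MapClusterPt.eq_of_tendsto {α X : Type*} [TopologicalSpace X] [T2Space X]
    {l : Filter α} {u : α → X} {x y : X} (hx : MapClusterPt x l u) (hy : Tendsto u l (𝓝 y)) :
    x = y :=
  eq_of_nhds_neBot (hx.clusterPt.mono hy).neBot

namespace WeakDual

variable {ι 𝕜 E : Type*} [RCLike 𝕜] [NormedAddCommGroup E] [NormedSpace 𝕜 E]

theorem exists_mapClusterPt_ne_of_not_tendsto {l : Filter ι} {g : ι → WeakDual 𝕜 E} {C : ℝ}
    (hg : ∀ i, ‖toStrongDual (g i)‖ ≤ C) {Φ₀ : WeakDual 𝕜 E} (h : ¬ Tendsto g l (𝓝 Φ₀)) :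
    ∃ Φ, Φ ≠ Φ₀ ∧ MapClusterPt Φ l g := by
  by_contra! hall
  exact h <| (isCompact_closedBall (0 : StrongDual 𝕜 E) C).tendsto_nhds_of_unique_mapClusterPt
    (.of_forall fun i => by simpa using hg i)
    fun Φ _ hΦ => Classical.byContradiction fun hne => hall Φ hne hΦ

end WeakDual

theorem statement3_general {𝕜 X : Type*} [RCLike 𝕜] [NormedAddCommGroup X] [NormedSpace 𝕜 X]
    (hrefl : Function.Surjective ⇑(NormedSpace.inclusionInDoubleDual 𝕜 X))
    (T : X →L[𝕜] X)
    (x : ℕ → X) (xs : ℕ → X →L[𝕜] 𝕜) (hcomp : IsCompatible T x xs) :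
    ∃ (v : X) (vs : X →L[𝕜] 𝕜), v ≠ 0 ∧ vs ≠ 0 ∧
      ∀ k : ℕ, 1 ≤ k → vs ((T ^ k) v) = 0 := by
  obtain ⟨⟨Cx, hCx⟩, ⟨Cs, hCs⟩, hx, hxs, ε, -, hε, hbound⟩ := hcomp
  obtain ⟨Φ, hΦ, hΦcl⟩ := WeakDual.exists_mapClusterPt_ne_of_not_tendsto (l := atTop)
    (g := fun n => StrongDual.toWeakDual (xs n)) hCs fun h => hxs ⟨id, strictMono_id, fun F => by
      obtain ⟨y, rfl⟩ := hrefl F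
      exact (WeakDual.eval_continuous y).tendsto 0 |>.comp h⟩
  obtain ⟨Ψ, hΨ, hΨcl⟩ := WeakDual.exists_mapClusterPt_ne_of_not_tendsto (l := atTop)
    (g := fun n => StrongDual.toWeakDual (NormedSpace.inclusionInDoubleDual 𝕜 X (x n)))
    (fun n => (NormedSpace.double_dual_bound 𝕜 X (x n)).trans (hCx n))
    fun h => hx ⟨id, strictMono_id, fun f => (WeakDual.eval_continuous f).tendsto 0 |>.comp h⟩
  obtain ⟨v, hv⟩ := hrefl (WeakDual.toStrongDual Ψ)
  have hv_cl (f : StrongDual 𝕜 X) : MapClusterPt (f v) atTop (fun n => f (x n)) := by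
    have hΨv : Ψ f = f v := by rw [← WeakDual.toStrongDual_apply, ← hv]; rfl
    exact hΨv ▸ hΨcl.continuousAt_comp (WeakDual.eval_continuous f).continuousAt
  have hΦ_orbit (k l : ℕ) (hk : 1 ≤ k) (hkl : k ≤ l) : Φ ((T ^ k) (x l)) = 0 :=
    (hΦcl.continuousAt_comp (WeakDual.eval_continuous _).continuousAt).eq_of_tendsto <|
      squeeze_zero_norm' ((eventually_ge_atTop l).mono fun m hm => (hbound k l m hk hkl hm).le) hε
  refine ⟨v, WeakDual.toStrongDual Φ, ?_, by simpa using hΦ, fun k hk => ?_⟩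
  · rintro rfl
    exact hΨ (by simpa using hv.symm)
  · exact (hv_cl ((WeakDual.toStrongDual Φ).comp (T ^ k))).eq_of_tendsto <|
      tendsto_const_nhds.congr' ((eventually_ge_atTop k).mono fun l hl => (hΦ_orbit k l hk hl).symm)

/-- If `X` is a reflexive Banach space, `T` a bounded operator on `X`, and `(x n)`, `(xs n)`
are compatible sequences for `T`, then there exist nonzero `v ∈ X` and `v* ∈ X*` with
`v*(T^k v) = 0` for all integers `k ≥ 1`. -/
theorem statement3 {𝕜 X : Type*} [RCLike 𝕜] [NormedAddCommGroup X] [NormedSpace 𝕜 X]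
    [CompleteSpace X]
    (hrefl : Function.Surjective ⇑(NormedSpace.inclusionInDoubleDual 𝕜 X))
    (T : X →L[𝕜] X)
    (x : ℕ → X) (xs : ℕ → X →L[𝕜] 𝕜) (hcomp : IsCompatible T x xs) :
    ∃ (v : X) (vs : X →L[𝕜] 𝕜), v ≠ 0 ∧ vs ≠ 0 ∧
      ∀ k : ℕ, 1 ≤ k → vs ((T ^ k) v) = 0 :=
  statement3_general hrefl T x xs hcomp
end

section
/- Let X be a Banach space, A a weakly compact convex subset of X with nonempty norm interior such that 0 ∉ A, V a weakly open neighborhood of the origin of X, and suppose a_1, …, a_n are points of the norm interior of A such that A ⊆ ⋃_{i=1}^n (a_i + V). Define B = {x^* ∈ X^* : there exists 1 ≤ i ≤ n such that Re x^*(x) ≥ 0 for all x ∈ A ∩ (a_i + V) and Re x^*(a_i) = 1}. Then B is nonempty, norm-bounded, and closed in the weak* topology of X^*. -/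
/-!
A Hahn–Banach functional separating `0` from the closed convex set `A` is positive on `A`, so
rescaling it at any `aᵢ` gives an element of `B`. Each piece `A ∩ (aᵢ + V)` of the cover is a norm
neighbourhood of `aᵢ`, say containing the ball of radius `δᵢ`; then `Re x*(aᵢ - z) ≥ 0` for
`‖z‖ < δᵢ` forces `Re x*(z) ≤ 1` on that ball, hence `‖x*‖ ≤ δᵢ⁻¹`. Finally `B` is a finite union
of intersections of weak-star closed half-spaces and hyperplanes.
-/

open Set Metric Filter Topology RCLike

section WeakTopology

variable {𝕜 E : Type*} [CommSemiring 𝕜] [TopologicalSpace 𝕜] [ContinuousAdd 𝕜]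
  [ContinuousConstSMul 𝕜 𝕜] [AddCommMonoid E] [Module 𝕜 E] [TopologicalSpace E]

theorem isClosed_of_isCompact_toWeakSpace_image [T2Space (WeakSpace 𝕜 E)] {s : Set E}
    (hs : IsCompact (toWeakSpace 𝕜 E '' s)) : IsClosed s := by
  rw [← (toWeakSpace 𝕜 E).injective.preimage_image s]
  exact hs.isClosed.preimage (toWeakSpaceCLM 𝕜 E).continuous

end WeakTopology

section NormalizedDualCone

variable (𝕜 : Type*) {E : Type*} [RCLike 𝕜] [AddCommGroup E] [Module 𝕜 E] [TopologicalSpace E]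

def normalizedDualCone (S : Set E) (a : E) : Set (E →L[𝕜] 𝕜) :=
  {f | (∀ x ∈ S, 0 ≤ re (f x)) ∧ re (f a) = 1}

variable {𝕜}

theorem isClosed_toWeakDual_image_normalizedDualCone (S : Set E) (a : E) :
    IsClosed (StrongDual.toWeakDual '' normalizedDualCone 𝕜 S a : Set (WeakDual 𝕜 E)) := by
  rw [LinearEquiv.image_eq_preimage_symm]
  change IsClosed ({g : WeakDual 𝕜 E | ∀ x ∈ S, 0 ≤ re (g x)} ∩ {g | re (g a) = 1})
  refine IsClosed.inter ?_ ?_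
  · simp only [ofPred_forall]
    exact isClosed_biInter fun x _ =>
      isClosed_le continuous_const (continuous_re.comp (WeakDual.eval_continuous x))
  · exact isClosed_eq (continuous_re.comp (WeakDual.eval_continuous a)) continuous_const

theorem normalizedDualCone_nonempty [Module ℝ E] [IsScalarTower ℝ 𝕜 E] [IsTopologicalAddGroup E]
    [ContinuousSMul 𝕜 E] [LocallyConvexSpace ℝ E] {A : Set E} (hconv : Convex ℝ A)
    (hclosed : IsClosed A) (h0 : (0 : E) ∉ A) {S : Set E} (hS : S ⊆ A) {a : E} (ha : a ∈ A) :
    (normalizedDualCone 𝕜 S a).Nonempty := by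
  obtain ⟨f, u, hu0, hu⟩ := geometric_hahn_banach_point_closed (𝕜 := 𝕜) hconv hclosed h0
  have hpos : ∀ x ∈ A, 0 < re (f x) := fun x hx => by simpa using hu0.trans (hu x hx)
  refine ⟨(re (f a))⁻¹ • f, fun x hx => ?_, ?_⟩
  · simpa only [smul_apply, smul_re] using
      mul_nonneg (inv_nonneg.2 (hpos a ha).le) (hpos x (hS hx)).le
  · simpa only [smul_apply, smul_re] using inv_mul_cancel₀ (hpos a ha).ne'

end NormalizedDualCone

section Bounded

variable {𝕜 X : Type*} [RCLike 𝕜] [NormedAddCommGroup X] [NormedSpace 𝕜 X]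

theorem ContinuousLinearMap.norm_le_inv_of_re_le_one_on_ball {f : X →L[𝕜] 𝕜} {δ : ℝ}
    (hδ : 0 < δ) (h : ∀ z ∈ ball (0 : X) δ, re (f z) ≤ 1) : ‖f‖ ≤ δ⁻¹ := by
  suffices f ∈ StrongDual.polar 𝕜 (ball (0 : X) δ) by
    simpa [NormedSpace.polar_ball hδ] using this
  intro z hz
  rcases eq_or_ne (f z) 0 with hfz | hfz
  · simp [hfz]
  -- rotate `z` so that `f` takes the real value `‖f z‖` on it
  set c : 𝕜 := ‖f z‖ / f z
  have hc : ‖c‖ = 1 := by simp [c, hfz]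
  have hcz : c • z ∈ ball (0 : X) δ := by
    rwa [mem_ball_zero_iff, norm_smul, hc, one_mul, ← mem_ball_zero_iff]
  have hfcz : f (c • z) = ‖f z‖ := by simp [c, hfz]
  simpa [hfcz] using h _ hcz

theorem normalizedDualCone_subset_closedBall {S : Set X} {a : X} {δ : ℝ} (hδ : 0 < δ)
    (hS : ball a δ ⊆ S) : normalizedDualCone 𝕜 S a ⊆ closedBall 0 δ⁻¹ := by
  rintro f ⟨hnonneg, hone⟩
  rw [mem_closedBall_zero_iff]
  refine f.norm_le_inv_of_re_le_one_on_ball hδ fun z hz => ?_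
  have hsub : a - z ∈ S := hS (by simpa [dist_eq_norm] using hz)
  have := hnonneg _ hsub
  rw [map_sub, map_sub, hone] at this
  linarith

theorem isBounded_normalizedDualCone {S : Set X} {a : X} (hS : S ∈ 𝓝 a) :
    Bornology.IsBounded (normalizedDualCone 𝕜 S a) :=
  let ⟨_, hδ, hball⟩ := Metric.mem_nhds_iff.1 hS
  isBounded_closedBall.subset (normalizedDualCone_subset_closedBall hδ hball)

end Bounded

theorem statement13_general {𝕜 X : Type*} [RCLike 𝕜] [NormedAddCommGroup X] [NormedSpace 𝕜 X]
    [NormedSpace ℝ X] [IsScalarTower ℝ 𝕜 X]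
    (A : Set X) (hAcpt : IsCompact (toWeakSpace 𝕜 X '' A)) (hconv : Convex ℝ A)
    (hint : (interior A).Nonempty) (h0A : (0 : X) ∉ A)
    (V : Set X) (hV : IsOpen (toWeakSpace 𝕜 X '' V)) (h0V : (0 : X) ∈ V)
    (n : ℕ) (a : Fin n → X) (ha : ∀ i, a i ∈ interior A)
    (hcover : A ⊆ ⋃ i, (a i + ·) '' V)
    (B : Set (X →L[𝕜] 𝕜))
    (hB : B = {f : X →L[𝕜] 𝕜 | ∃ i,
        (∀ x ∈ A ∩ ((a i + ·) '' V), 0 ≤ RCLike.re (f x)) ∧ RCLike.re (f (a i)) = 1}) :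
    B.Nonempty ∧ Bornology.IsBounded B ∧
      IsClosed (StrongDual.toWeakDual '' B : Set (WeakDual 𝕜 X)) := by
  have hB' : B = ⋃ i, normalizedDualCone 𝕜 (A ∩ (a i + ·) '' V) (a i) := by
    rw [hB]; ext f; simp only [mem_ofPred_eq, mem_iUnion, normalizedDualCone]
  rw [hB']
  have hAclosed : IsClosed A := isClosed_of_isCompact_toWeakSpace_image hAcpt
  have hVopen : IsOpen V := WeakSpace.isOpen_of_isOpen V hV
  refine ⟨?_, ?_, ?_⟩
  · obtain ⟨x₀, hx₀⟩ := hint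
    obtain ⟨i, -⟩ := mem_iUnion.1 (hcover (interior_subset hx₀))
    obtain ⟨f, hf⟩ := normalizedDualCone_nonempty (𝕜 := 𝕜) hconv hAclosed h0A inter_subset_left
      (interior_subset (ha i))
    exact ⟨f, mem_iUnion.2 ⟨i, hf⟩⟩
  · refine Bornology.isBounded_iUnion.2 fun i => isBounded_normalizedDualCone ?_
    exact inter_mem (mem_interior_iff_mem_nhds.1 (ha i))
      (by simpa using (isOpenMap_add_left (a i)).image_mem_nhds (hVopen.mem_nhds h0V))
  · rw [image_iUnion]
    exact isClosed_iUnion_of_finite fun i => isClosed_toWeakDual_image_normalizedDualCone _ _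

/-- Let `X` be a Banach space, `A` a weakly compact convex subset of `X` with nonempty norm
interior such that `0 ∉ A`, `V` a weakly open neighborhood of the origin, and `a₁, …, aₙ`
points of the norm interior of `A` with `A ⊆ ⋃ᵢ (aᵢ + V)`.  Then
`B = {x* ∈ X* : ∃ i, Re x*(x) ≥ 0 for all x ∈ A ∩ (aᵢ + V) and Re x*(aᵢ) = 1}` is nonempty,
norm-bounded, and closed in the weak* topology of `X*`. -/
theorem statement13 {𝕜 X : Type*} [RCLike 𝕜] [NormedAddCommGroup X] [NormedSpace 𝕜 X]
    [NormedSpace ℝ X] [IsScalarTower ℝ 𝕜 X] [CompleteSpace X]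
    (A : Set X) (hAcpt : IsCompact (toWeakSpace 𝕜 X '' A)) (hconv : Convex ℝ A)
    (hint : (interior A).Nonempty) (h0A : (0 : X) ∉ A)
    (V : Set X) (hV : IsOpen (toWeakSpace 𝕜 X '' V)) (h0V : (0 : X) ∈ V)
    (n : ℕ) (a : Fin n → X) (ha : ∀ i, a i ∈ interior A)
    (hcover : A ⊆ ⋃ i, (a i + ·) '' V)
    (B : Set (X →L[𝕜] 𝕜))
    (hB : B = {f : X →L[𝕜] 𝕜 | ∃ i,
        (∀ x ∈ A ∩ ((a i + ·) '' V), 0 ≤ RCLike.re (f x)) ∧ RCLike.re (f (a i)) = 1}) :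
    B.Nonempty ∧ Bornology.IsBounded B ∧
      IsClosed (StrongDual.toWeakDual '' B : Set (WeakDual 𝕜 X)) :=
  statement13_general A hAcpt hconv hint h0A V hV h0V n a ha hcover B hB
end
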